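/- Assume additionally that λ < a and λ < h. Then for every x ∈ [0,π] and every integer k ≥ 1, the functions y ↦ L(x,y) and y ↦ L(y) are differentiable on the open interval (y_k, y_{k+1}), and there exists a constant C > 0 (independent of k, x and y) such that |L(y)·∂_y L(x,y) − L(x,y)·∂_y L(y)| ≤ C·(λ/a)^k·L(y)² for every x ∈ [0,π] and every y ∈ (y_k, y_{k+1}). In particular sup_{x∈[0,π]} |L(y)·∂_y L(x,y) − L(x,y)·∂_y L(y)| / L(y)² → 0 as y → y_∞. -/

import Mathlib

/-!
On the strip `(y_k, y_{k+1})`, with `λ = 1/N`, `c = φ_k(y)`, `α = (h/λ)^k` and `β = (h/λ)^(k+1)`,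
the slope is `∂₁ψ(t, y) = (1 - c) α cos (N^k t) + c β cos (N^(k+1) t)`. So `L(x, y) = A(c, x)` with
`A(c, x) = ∫_0^x √(1 + ∂₁ψ²)`, and `L(y) ∂_y L(x, y) - L(x, y) ∂_y L(y)` equals `φ_k'(y)` times the
determinant `A(c, π) ∂_c A(c, x) - A(c, x) ∂_c A(c, π)`. Both integrands have period `2π/N^k`. Write
each integral as a whole number of periods plus a remainder: the full periods cancel in the
determinant, which leaves `O(β²/N^k)`. Together with `|φ_k'| ≤ 2/a^(k+1)` and `L(y) ≥ π α/4`, this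
gives `O((λ/a)^k L(y)²)`.
-/

open Real MeasureTheory Set Filter

noncomputable section

namespace StokesCounterexample

/-- `ySeq a k = Σ_{j=1}^k a^j` (so `ySeq a 0 = 0`). -/
def ySeq (a : ℝ) (k : ℕ) : ℝ := ∑ j ∈ Finset.range k, a ^ (j + 1)

/-- `yInf a = Σ_{j=1}^∞ a^j = a / (1 - a)`. -/
def yInf (a : ℝ) : ℝ := a / (1 - a)

/-- `fSeq h l 0 = 0` and `fSeq h l k x = h^k · sin (x / l^k)` for `k ≥ 1`. -/
def fSeq (h l : ℝ) (k : ℕ) (x : ℝ) : ℝ :=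
  if k = 0 then 0 else h ^ k * Real.sin (x / l ^ k)

open Classical in
/-- The interpolation `ψ(x,y) = (1 - φ_k(y))·f_k(x) + φ_k(y)·f_{k+1}(x)` for
`y ∈ [y_k, y_{k+1})`, where `φ_k(y) = φ((y - y_k)/a^(k+1))`, extended by `0`
outside of `⋃_k [y_k, y_{k+1})` (in particular `ψ(x, y_∞) = 0`). -/
def psi (a h l : ℝ) (φ : ℝ → ℝ) (x y : ℝ) : ℝ :=
  if hk : ∃ k : ℕ, ySeq a k ≤ y ∧ y < ySeq a (k + 1) then
    (1 - φ ((y - ySeq a hk.choose) / a ^ (hk.choose + 1))) * fSeq h l hk.choose x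
      + φ ((y - ySeq a hk.choose) / a ^ (hk.choose + 1)) * fSeq h l (hk.choose + 1) x
  else 0

/-- The partial derivative of `ψ` in the first variable. -/
def psi₁ (a h l : ℝ) (φ : ℝ → ℝ) (x y : ℝ) : ℝ :=
  deriv (fun t => psi a h l φ t y) x

/-- The partial derivative of `ψ` in the second variable. -/
def psi₂ (a h l : ℝ) (φ : ℝ → ℝ) (x y : ℝ) : ℝ :=
  deriv (fun s => psi a h l φ x s) y

/-- The arc length `L(x,y) = ∫_0^x √(1 + (∂₁ψ(t,y))²) dt`. -/
def arc (a h l : ℝ) (φ : ℝ → ℝ) (x y : ℝ) : ℝ :=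
  ∫ t in (0:ℝ)..x, Real.sqrt (1 + psi₁ a h l φ t y ^ 2)

/-- The length `L(y) = L(π, y)` of the section of the graph of `ψ` at height `y`. -/
def len (a h l : ℝ) (φ : ℝ → ℝ) (y : ℝ) : ℝ := arc a h l φ π y

open Function

lemma integral_cos_int_mul_eq_zero {j : ℤ} (hj : j ≠ 0) :
    ∫ t in (0:ℝ)..π, cos (j * t) = 0 := by
  rw [intervalIntegral.integral_comp_mul_left cos (Int.cast_ne_zero.mpr hj)]
  simp [sin_int_mul_pi]

lemma integral_cos_nat_mul_mul_cos {m n : ℕ} (hm : 0 < m) (hn : 0 < n) :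
    ∫ t in (0:ℝ)..π, cos (m * t) * cos (n * t) = if m = n then π / 2 else 0 := by
  have product_to_sum : ∀ t : ℝ, cos (m * t) * cos (n * t)
      = (cos (((m - n : ℤ) : ℝ) * t) + cos (((m + n : ℤ) : ℝ) * t)) / 2 := by
    intro t
    push_cast
    rw [sub_mul, add_mul, cos_sub, cos_add]
    ring
  simp only [product_to_sum]
  rw [intervalIntegral.integral_div, intervalIntegral.integral_add
    ((by fun_prop : Continuous fun t : ℝ => cos (_ * t)).intervalIntegrable _ _)
    ((by fun_prop : Continuous fun t : ℝ => cos (_ * t)).intervalIntegrable _ _),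
    integral_cos_int_mul_eq_zero (j := m + n) (by omega)]
  split_ifs with hmn
  · simp [hmn]
  · rw [integral_cos_int_mul_eq_zero (by omega)]
    simp

lemma abs_integral_mul_cos_le_integral_sqrt_one_add_sq {p : ℝ → ℝ} (hp : Continuous p) (ω : ℝ) :
    |∫ t in (0:ℝ)..π, p t * cos (ω * t)| ≤ ∫ t in (0:ℝ)..π, √(1 + p t ^ 2) := by
  refine (intervalIntegral.abs_integral_le_integral_abs pi_pos.le).trans
    (intervalIntegral.integral_mono_on pi_pos.le
      ((by fun_prop : Continuous _).intervalIntegrable _ _)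
      ((by fun_prop : Continuous _).intervalIntegrable _ _) fun t _ => ?_)
  calc |p t * cos (ω * t)| ≤ |p t| := by
        rw [abs_mul]; exact mul_le_of_le_one_right (abs_nonneg _) (abs_cos_le_one _)
    _ = √(p t ^ 2) := (sqrt_sq_eq_abs _).symm
    _ ≤ √(1 + p t ^ 2) := sqrt_le_sqrt (by linarith)

lemma pi_le_integral_sqrt_one_add_sq {p : ℝ → ℝ} (hp : Continuous p) :
    π ≤ ∫ t in (0:ℝ)..π, √(1 + p t ^ 2) := by
  have := intervalIntegral.integral_mono_on pi_pos.le intervalIntegrable_const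
    ((by fun_prop : Continuous fun t => √(1 + p t ^ 2)).intervalIntegrable (μ := volume) _ _)
    fun t _ => one_le_sqrt.mpr (le_add_of_nonneg_right (sq_nonneg (p t)))
  simpa using this

lemma exists_intervalIntegral_eq_floor_mul_add_of_periodic {F : ℝ → ℝ} {T M z : ℝ}
    (hF : Periodic F T) (hT : 0 < T) (hFc : Continuous F) (hM : ∀ t, |F t| ≤ M) (hz : 0 ≤ z) :
    ∃ e, |e| ≤ T * M ∧ ∫ t in (0:ℝ)..z, F t = ⌊z / T⌋₊ * (∫ t in (0:ℝ)..T, F t) + e := by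
  set n := ⌊z / T⌋₊
  have hnz : n * T ≤ z := (le_div_iff₀ hT).mp (Nat.floor_le (by positivity))
  have hzn : z < n * T + T := by
    have := (div_lt_iff₀ hT).mp (Nat.lt_floor_add_one (z / T))
    linarith
  refine ⟨∫ t in (n * T)..z, F t, ?_, ?_⟩
  · have := intervalIntegral.norm_integral_le_of_norm_le_const (a := n * T) (b := z)
      fun t _ => (norm_eq_abs _).trans_le (hM t)
    rw [norm_eq_abs, abs_of_nonneg (sub_nonneg.mpr hnz)] at this
    nlinarith [(abs_nonneg _).trans (hM 0)]
  · have hmul : ∫ t in (0:ℝ)..n * T, F t = n * ∫ t in (0:ℝ)..T, F t := by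
      simpa using hF.intervalIntegral_add_zsmul_eq n 0 fun _ _ => hFc.intervalIntegrable _ _
    rw [← intervalIntegral.integral_add_adjacent_intervals (hFc.intervalIntegrable 0 (n * T))
      (hFc.intervalIntegrable _ z), hmul]

lemma abs_floor_div_mul_le {T b z e M : ℝ} (hT : 0 < T) (hb : 0 ≤ b) (hzb : z ≤ b)
    (he : |e| ≤ T * M) : |(⌊z / T⌋₊ : ℝ) * e| ≤ b * M := by
  have hfloor : (⌊z / T⌋₊ : ℝ) * T ≤ b := by
    rcases le_or_gt 0 z with hz | hz
    · exact ((le_div_iff₀ hT).mp (Nat.floor_le (by positivity))).trans hzb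
    · simp [Nat.floor_eq_zero.mpr ((div_neg_of_neg_of_pos hz hT).trans zero_lt_one), hb]
  rw [abs_mul, Nat.abs_cast]
  nlinarith [abs_nonneg e, (Nat.cast_nonneg _ : (0:ℝ) ≤ ⌊z / T⌋₊)]

lemma abs_integral_mul_integral_sub_le_of_periodic {F G : ℝ → ℝ} {T MF MG b x : ℝ} (hT : 0 < T)
    (hF : Periodic F T) (hG : Periodic G T) (hFc : Continuous F) (hGc : Continuous G)
    (hMF : ∀ t, |F t| ≤ MF) (hMG : ∀ t, |G t| ≤ MG) (hx0 : 0 ≤ x) (hxb : x ≤ b) :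
    |(∫ t in (0:ℝ)..b, F t) * (∫ t in (0:ℝ)..x, G t)
        - (∫ t in (0:ℝ)..x, F t) * (∫ t in (0:ℝ)..b, G t)|
      ≤ 2 * T * (2 * b + T) * MF * MG := by
  have hMF0 : 0 ≤ MF := (abs_nonneg _).trans (hMF 0)
  have hMG0 : 0 ≤ MG := (abs_nonneg _).trans (hMG 0)
  have period_bound : ∀ {H : ℝ → ℝ} {M : ℝ}, (∀ t, |H t| ≤ M) → |∫ t in (0:ℝ)..T, H t| ≤ T * M :=
    fun hM => by
      simpa [abs_of_pos hT, mul_comm] using intervalIntegral.norm_integral_le_of_norm_le_const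
        (a := 0) (b := T) fun t _ => (norm_eq_abs _).trans_le (hM t)
  have hb := hx0.trans hxb
  obtain ⟨e₁, he₁, hFb⟩ := exists_intervalIntegral_eq_floor_mul_add_of_periodic hF hT hFc hMF hb
  obtain ⟨e₂, he₂, hGx⟩ := exists_intervalIntegral_eq_floor_mul_add_of_periodic hG hT hGc hMG hx0
  obtain ⟨e₃, he₃, hFx⟩ := exists_intervalIntegral_eq_floor_mul_add_of_periodic hF hT hFc hMF hx0
  obtain ⟨e₄, he₄, hGb⟩ := exists_intervalIntegral_eq_floor_mul_add_of_periodic hG hT hGc hMG hb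
  set AF := ∫ t in (0:ℝ)..T, F t
  set AG := ∫ t in (0:ℝ)..T, G t
  set m : ℝ := (⌊b / T⌋₊ : ℝ)
  set n : ℝ := (⌊x / T⌋₊ : ℝ)
  have hAF := period_bound hMF
  have hAG := period_bound hMG
  have h₁ := abs_floor_div_mul_le hT hb le_rfl he₂
  have h₂ := abs_floor_div_mul_le hT hb hxb he₄
  have h₃ := abs_floor_div_mul_le hT hb hxb he₁
  have h₄ := abs_floor_div_mul_le hT hb le_rfl he₃
  rw [hFb, hGx, hFx, hGb]
  -- the full-period terms `m n AF AG` cancel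
  calc |(m * AF + e₁) * (n * AG + e₂) - (n * AF + e₃) * (m * AG + e₄)|
      = |AF * (m * e₂ - n * e₄) + AG * (n * e₁ - m * e₃) + (e₁ * e₂ - e₃ * e₄)| := by ring_nf
    _ ≤ |AF| * (|m * e₂| + |n * e₄|) + |AG| * (|n * e₁| + |m * e₃|)
          + (|e₁| * |e₂| + |e₃| * |e₄|) := by
      refine (abs_add_three _ _ _).trans ?_
      rw [abs_mul AF, abs_mul AG, ← abs_mul e₁, ← abs_mul e₃]
      gcongr <;> exact abs_sub _ _
    _ ≤ T * MF * (b * MG + b * MG) + T * MG * (b * MF + b * MF)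
          + (T * MF * (T * MG) + T * MF * (T * MG)) := by
      gcongr
    _ = 2 * T * (2 * b + T) * MF * MG := by ring

lemma abs_mul_div_sqrt_one_add_sq_le (u v : ℝ) : |u * v / √(1 + u ^ 2)| ≤ |v| := by
  have hpos : 0 < √(1 + u ^ 2) := sqrt_pos.mpr (by positivity)
  have hu : |u| ≤ √(1 + u ^ 2) := by
    rw [← sqrt_sq_eq_abs]; exact sqrt_le_sqrt (by linarith)
  rw [abs_div, abs_mul, abs_of_pos hpos, div_le_iff₀ hpos, mul_comm]
  exact mul_le_mul_of_nonneg_left hu (abs_nonneg v)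

lemma hasDerivAt_sqrt_one_add_sq_add_mul (p q c : ℝ) :
    HasDerivAt (fun c => √(1 + (p + c * q) ^ 2)) ((p + c * q) * q / √(1 + (p + c * q) ^ 2)) c := by
  have h : HasDerivAt (fun c => 1 + (p + c * q) ^ 2) (2 * (p + c * q) * q) c :=
    (((((hasDerivAt_id' c).mul_const q).const_add p).fun_pow 2).const_add 1).congr_deriv (by simp)
  convert h.sqrt (by positivity) using 1
  field_simp

lemma hasDerivAt_integral_sqrt_one_add_sq {P Q : ℝ → ℝ} (hP : Continuous P) (hQ : Continuous Q)
    (x c : ℝ) :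
    HasDerivAt (fun c => ∫ t in (0:ℝ)..x, √(1 + (P t + c * Q t) ^ 2))
      (∫ t in (0:ℝ)..x, (P t + c * Q t) * Q t / √(1 + (P t + c * Q t) ^ 2)) c := by
  have hG : Continuous fun t => (P t + c * Q t) * Q t / √(1 + (P t + c * Q t) ^ 2) :=
    (by fun_prop : Continuous fun t => (P t + c * Q t) * Q t).div (by fun_prop)
      fun t => (sqrt_pos.mpr (by positivity)).ne'
  exact (intervalIntegral.hasDerivAt_integral_of_dominated_loc_of_deriv_le
    (F := fun c t => √(1 + (P t + c * Q t) ^ 2))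
    (F' := fun c t => (P t + c * Q t) * Q t / √(1 + (P t + c * Q t) ^ 2))
    (bound := fun t => |Q t|) (s := univ) univ_mem
    (Eventually.of_forall fun _ => (by fun_prop : Continuous _).aestronglyMeasurable)
    ((by fun_prop : Continuous _).intervalIntegrable _ _) hG.aestronglyMeasurable
    (ae_of_all _ fun t _ c _ => (norm_eq_abs _).trans_le (abs_mul_div_sqrt_one_add_sq_le _ _))
    (hQ.abs.intervalIntegrable _ _)
    (ae_of_all _ fun t _ c _ => hasDerivAt_sqrt_one_add_sq_add_mul _ _ c)).2

lemma periodic_cos_nat_mul_of_dvd {m n : ℕ} (hm : 0 < m) (hmn : m ∣ n) :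
    Periodic (fun t => cos (n * t)) (2 * π / m) := by
  obtain ⟨d, rfl⟩ := hmn
  intro t
  have hm' : (m : ℝ) ≠ 0 := by positivity
  simp only
  rw [← cos_add_nat_mul_two_pi (↑(m * d) * t) d]
  congr 1
  push_cast
  field_simp

section TwoModes

variable {α β : ℝ} {m n : ℕ} {c : ℝ}

/-- `∂₁ψ` on a strip `[y_k, y_{k+1})` for `λ = 1/N` is `interpSlope α β m n (φ_k y)` with
`α = (h N)^k`, `β = (h N)^(k+1)`, `m = N^k`, `n = N^(k+1)`. -/
def interpSlope (α β : ℝ) (m n : ℕ) (c t : ℝ) : ℝ :=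
  (1 - c) * (α * cos (m * t)) + c * (β * cos (n * t))

def slopeGap (α β : ℝ) (m n : ℕ) (t : ℝ) : ℝ := β * cos (n * t) - α * cos (m * t)

def modelArc (α β : ℝ) (m n : ℕ) (c x : ℝ) : ℝ :=
  ∫ t in (0:ℝ)..x, √(1 + interpSlope α β m n c t ^ 2)

def modelArcDeriv (α β : ℝ) (m n : ℕ) (c x : ℝ) : ℝ :=
  ∫ t in (0:ℝ)..x, interpSlope α β m n c t * slopeGap α β m n t / √(1 + interpSlope α β m n c t ^ 2)

lemma interpSlope_eq_add_mul (t : ℝ) :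
    interpSlope α β m n c t = α * cos (m * t) + c * slopeGap α β m n t := by
  unfold interpSlope slopeGap; ring

@[fun_prop]
lemma continuous_interpSlope : Continuous (interpSlope α β m n c) := by
  unfold interpSlope; fun_prop

@[fun_prop]
lemma continuous_slopeGap : Continuous (slopeGap α β m n) := by
  unfold slopeGap; fun_prop

lemma hasDerivAt_modelArc (x : ℝ) :
    HasDerivAt (fun c => modelArc α β m n c x) (modelArcDeriv α β m n c x) c := by
  simp only [modelArc, modelArcDeriv, interpSlope_eq_add_mul]
  exact hasDerivAt_integral_sqrt_one_add_sq (by fun_prop) continuous_slopeGap x c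

lemma periodic_interpSlope (hm : 0 < m) (hmn : m ∣ n) :
    Periodic (interpSlope α β m n c) (2 * π / m) := fun t => by
  simp only [interpSlope, periodic_cos_nat_mul_of_dvd hm dvd_rfl t,
    periodic_cos_nat_mul_of_dvd hm hmn t]

lemma periodic_slopeGap (hm : 0 < m) (hmn : m ∣ n) :
    Periodic (slopeGap α β m n) (2 * π / m) := fun t => by
  simp only [slopeGap, periodic_cos_nat_mul_of_dvd hm dvd_rfl t,
    periodic_cos_nat_mul_of_dvd hm hmn t]

lemma abs_interpSlope_le (hc : c ∈ Icc 0 1) (hα : 0 ≤ α) (hαβ : α ≤ β) (t : ℝ) :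
    |interpSlope α β m n c t| ≤ β := by
  have h1c : 0 ≤ 1 - c := sub_nonneg.mpr hc.2
  calc |interpSlope α β m n c t|
      ≤ (1 - c) * (α * |cos (m * t)|) + c * (β * |cos (n * t)|) := by
        refine (abs_add_le _ _).trans_eq ?_
        rw [abs_mul, abs_mul, abs_mul, abs_mul, abs_of_nonneg h1c, abs_of_nonneg hc.1,
          abs_of_nonneg hα, abs_of_nonneg (hα.trans hαβ)]
    _ ≤ (1 - c) * (α * 1) + c * (β * 1) := by
        have := hα.trans hαβ
        have := hc.1
        gcongr <;> exact abs_cos_le_one _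
    _ ≤ β := by nlinarith [hc.1]

lemma abs_slopeGap_le (hα : 0 ≤ α) (hαβ : α ≤ β) (t : ℝ) : |slopeGap α β m n t| ≤ 2 * β := by
  have hm := abs_le.mp (abs_cos_le_one (m * t))
  have hn := abs_le.mp (abs_cos_le_one (n * t))
  rw [abs_le]
  unfold slopeGap
  constructor <;> nlinarith

lemma pi_le_modelArc : π ≤ modelArc α β m n c π :=
  pi_le_integral_sqrt_one_add_sq continuous_interpSlope

lemma integral_interpSlope_mul_cos (hm : 0 < m) (hn : 0 < n) {j : ℕ} (hj : 0 < j) :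
    ∫ t in (0:ℝ)..π, interpSlope α β m n c t * cos (j * t)
      = (1 - c) * α * (if m = j then π / 2 else 0) + c * β * (if n = j then π / 2 else 0) := by
  have hsplit : ∀ t, interpSlope α β m n c t * cos (j * t)
      = (1 - c) * α * (cos (m * t) * cos (j * t)) + c * β * (cos (n * t) * cos (j * t)) := by
    intro t; unfold interpSlope; ring
  simp only [hsplit]
  rw [intervalIntegral.integral_add ((by fun_prop : Continuous _).intervalIntegrable _ _)
      ((by fun_prop : Continuous _).intervalIntegrable _ _),
    intervalIntegral.integral_const_mul, intervalIntegral.integral_const_mul,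
    integral_cos_nat_mul_mul_cos hm hj, integral_cos_nat_mul_mul_cos hn hj]

/-- Testing against `cos (m t)` and `cos (n t)` shows that the arc length dominates both
amplitudes `(1 - c) α` and `c β`, whose sum is at least `α`. -/
lemma pi_mul_div_four_le_modelArc (hc : c ∈ Icc 0 1) (hαβ : α ≤ β) (hm : 0 < m) (hn : 0 < n)
    (hmn : m ≠ n) : π * α / 4 ≤ modelArc α β m n c π := by
  have test : ∀ {j : ℕ}, 0 < j →
      |∫ t in (0:ℝ)..π, interpSlope α β m n c t * cos (j * t)| ≤ modelArc α β m n c π :=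
    fun _ => abs_integral_mul_cos_le_integral_sqrt_one_add_sq continuous_interpSlope _
  have hm' := test hm
  have hn' := test hn
  rw [integral_interpSlope_mul_cos hm hn hm, if_pos rfl, if_neg (Ne.symm hmn)] at hm'
  rw [integral_interpSlope_mul_cos hm hn hn, if_pos rfl, if_neg hmn] at hn'
  have hm'' := (le_abs_self _).trans hm'
  have hn'' := (le_abs_self _).trans hn'
  nlinarith [mul_nonneg (mul_nonneg pi_pos.le hc.1) (sub_nonneg.mpr hαβ)]

lemma abs_modelArc_mul_modelArcDeriv_sub_le (hc : c ∈ Icc 0 1) (hα : 0 ≤ α) (hαβ : α ≤ β)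
    (hβ : 1 ≤ β) (hm : 0 < m) (hmn : m ∣ n) {x : ℝ} (hx : x ∈ Icc 0 π) :
    |modelArc α β m n c π * modelArcDeriv α β m n c x
        - modelArc α β m n c x * modelArcDeriv α β m n c π| ≤ 64 * π ^ 2 * β ^ 2 / m := by
  set T := 2 * π / m
  have hm1 : (1 : ℝ) ≤ m := by exact_mod_cast hm
  have hT : 0 < T := by positivity
  have hT2 : T ≤ 2 * π := div_le_self (by positivity) hm1
  have hp : Periodic (interpSlope α β m n c) T := periodic_interpSlope hm hmn
  have hq : Periodic (slopeGap α β m n) T := periodic_slopeGap hm hmn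
  have hF : ∀ t, |√(1 + interpSlope α β m n c t ^ 2)| ≤ 2 * β := fun t => by
    rw [abs_of_nonneg (sqrt_nonneg _), sqrt_le_left (by linarith)]
    nlinarith [abs_interpSlope_le (m := m) (n := n) hc hα hαβ t, sq_abs (interpSlope α β m n c t),
      abs_nonneg (interpSlope α β m n c t)]
  have hG : ∀ t, |interpSlope α β m n c t * slopeGap α β m n t
      / √(1 + interpSlope α β m n c t ^ 2)| ≤ 2 * β := fun t =>
    (abs_mul_div_sqrt_one_add_sq_le _ _).trans (abs_slopeGap_le hα hαβ t)
  have hG_periodic : Periodic (fun t => interpSlope α β m n c t * slopeGap α β m n t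
      / √(1 + interpSlope α β m n c t ^ 2)) T := fun t => by simp only [hp t, hq t]
  have hdet := abs_integral_mul_integral_sub_le_of_periodic hT
    (hp.comp fun u => √(1 + u ^ 2)) hG_periodic
    (by fun_prop : Continuous fun t => √(1 + interpSlope α β m n c t ^ 2))
    ((continuous_interpSlope.mul continuous_slopeGap).div (by fun_prop)
      fun t => (sqrt_pos.mpr (by positivity)).ne') hF hG hx.1 hx.2
  calc _ ≤ 2 * T * (2 * π + T) * (2 * β) * (2 * β) := hdet
    _ ≤ 2 * T * (4 * π) * (2 * β) * (2 * β) := by gcongr; linarith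
    _ = 64 * π ^ 2 * β ^ 2 / m := by ring

end TwoModes

lemma ySeq_succ (a : ℝ) (k : ℕ) : ySeq a (k + 1) = ySeq a k + a ^ (k + 1) :=
  Finset.sum_range_succ _ _

lemma ySeq_strictMono {a : ℝ} (ha : 0 < a) : StrictMono (ySeq a) :=
  strictMono_nat_of_lt_succ fun k => by
    rw [ySeq_succ]; exact lt_add_of_pos_right _ (pow_pos ha _)

lemma ySeq_mul_one_sub (a : ℝ) (k : ℕ) : ySeq a k * (1 - a) = a - a ^ (k + 1) := by
  induction k with
  | zero => simp [ySeq]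
  | succ k ih => rw [ySeq_succ, add_mul, ih]; ring

lemma ySeq_lt_yInf {a : ℝ} (ha0 : 0 < a) (ha1 : a < 1) (k : ℕ) : ySeq a k < yInf a := by
  rw [yInf, lt_div_iff₀ (sub_pos.mpr ha1), ySeq_mul_one_sub]
  linarith [pow_pos ha0 (k + 1)]

lemma le_of_ySeq_lt {a y : ℝ} (ha : 0 < a) {K k : ℕ} (hK : ySeq a K < y)
    (hk : y < ySeq a (k + 1)) : K ≤ k :=
  Nat.lt_succ_iff.mp ((ySeq_strictMono ha).lt_iff_lt.mp (hK.trans hk))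

lemma psi_eq_of_mem_Ico {a h l : ℝ} (ha : 0 < a) (φ : ℝ → ℝ) {k : ℕ} {y : ℝ}
    (hy : y ∈ Ico (ySeq a k) (ySeq a (k + 1))) (x : ℝ) :
    psi a h l φ x y = (1 - φ ((y - ySeq a k) / a ^ (k + 1))) * fSeq h l k x
      + φ ((y - ySeq a k) / a ^ (k + 1)) * fSeq h l (k + 1) x := by
  have hex : ∃ j : ℕ, ySeq a j ≤ y ∧ y < ySeq a (j + 1) := ⟨k, hy⟩
  have hmono := (ySeq_strictMono ha).monotone
  have hchoose : hex.choose = k := by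
    obtain ⟨h₁, h₂⟩ := hex.choose_spec
    refine le_antisymm ?_ ?_
    · by_contra! hlt
      exact ((hmono (Nat.succ_le_of_lt hlt)).trans h₁).not_gt hy.2
    · by_contra! hlt
      exact ((hmono (Nat.succ_le_of_lt hlt)).trans hy.1).not_gt h₂
  rw [psi, dif_pos hex, hchoose]

/-- The paper's `φ_k`. -/
def phiSeq (a : ℝ) (φ : ℝ → ℝ) (k : ℕ) (y : ℝ) : ℝ := φ ((y - ySeq a k) / a ^ (k + 1))

lemma hasDerivAt_phiSeq {a : ℝ} {φ : ℝ → ℝ} (hφ : Differentiable ℝ φ) (k : ℕ) (y : ℝ) :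
    HasDerivAt (phiSeq a φ k) (deriv φ ((y - ySeq a k) / a ^ (k + 1)) / a ^ (k + 1)) y :=
  ((hφ _).hasDerivAt.comp y (((hasDerivAt_id y).sub_const _).div_const _)).congr_deriv
    (by simp [div_eq_mul_inv])

lemma abs_deriv_phiSeq_le {a : ℝ} {φ : ℝ → ℝ} (ha : 0 < a) (hφ : Differentiable ℝ φ)
    (hφ' : ∀ t, |deriv φ t| ≤ 2) (k : ℕ) (y : ℝ) :
    |deriv (phiSeq a φ k) y| ≤ 2 / a ^ (k + 1) := by
  rw [(hasDerivAt_phiSeq hφ k y).deriv, abs_div, abs_of_pos (pow_pos ha _)]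
  exact div_le_div_of_nonneg_right (hφ' _) (pow_pos ha _).le

lemma hasDerivAt_fSeq {h l : ℝ} {N j : ℕ} (hlN : l = 1 / N) (hj : j ≠ 0) (t : ℝ) :
    HasDerivAt (fSeq h l j) ((h * N) ^ j * cos ((N ^ j : ℕ) * t)) t := by
  have hfun : fSeq h l j = fun t => h ^ j * sin ((N ^ j : ℕ) * t) := by
    funext t
    simp [fSeq, hj, hlN, mul_comm]
  rw [hfun]
  exact ((((hasDerivAt_id' t).const_mul ((N ^ j : ℕ) : ℝ)).sin).const_mul (h ^ j)).congr_deriv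
    (by push_cast; ring)

section Strip

variable {a h l : ℝ} {φ : ℝ → ℝ} {N k : ℕ} {y : ℝ}

lemma psi₁_eq_interpSlope (ha : 0 < a) (hlN : l = 1 / N) (hk : k ≠ 0)
    (hy : y ∈ Ico (ySeq a k) (ySeq a (k + 1))) (t : ℝ) :
    psi₁ a h l φ t y
      = interpSlope ((h * N) ^ k) ((h * N) ^ (k + 1)) (N ^ k) (N ^ (k + 1)) (phiSeq a φ k y) t := by
  have hfun : (fun t => psi a h l φ t y)
      = fun t => (1 - phiSeq a φ k y) * fSeq h l k t + phiSeq a φ k y * fSeq h l (k + 1) t :=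
    funext (psi_eq_of_mem_Ico ha φ hy)
  rw [psi₁, hfun]
  exact (((hasDerivAt_fSeq hlN hk t).const_mul _).add
    ((hasDerivAt_fSeq hlN k.succ_ne_zero t).const_mul _)).deriv

lemma arc_eq_modelArc (ha : 0 < a) (hlN : l = 1 / N) (hk : k ≠ 0)
    (hy : y ∈ Ico (ySeq a k) (ySeq a (k + 1))) (x : ℝ) :
    arc a h l φ x y
      = modelArc ((h * N) ^ k) ((h * N) ^ (k + 1)) (N ^ k) (N ^ (k + 1)) (phiSeq a φ k y) x := by
  simp only [arc, modelArc, psi₁_eq_interpSlope ha hlN hk hy]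

lemma pi_le_len (ha : 0 < a) (hlN : l = 1 / N) (hk : k ≠ 0)
    (hy : y ∈ Ico (ySeq a k) (ySeq a (k + 1))) : π ≤ len a h l φ y := by
  rw [len, arc_eq_modelArc ha hlN hk hy]
  exact pi_le_modelArc

lemma hasDerivAt_arc (ha : 0 < a) (hlN : l = 1 / N) (hk : k ≠ 0) (hφ : Differentiable ℝ φ)
    (hy : y ∈ Ioo (ySeq a k) (ySeq a (k + 1))) (x : ℝ) :
    HasDerivAt (fun s => arc a h l φ x s)
      (modelArcDeriv ((h * N) ^ k) ((h * N) ^ (k + 1)) (N ^ k) (N ^ (k + 1)) (phiSeq a φ k y) x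
        * deriv (phiSeq a φ k) y) y := by
  refine ((hasDerivAt_modelArc x).comp y
    (hasDerivAt_phiSeq hφ k y).differentiableAt.hasDerivAt).congr_of_eventuallyEq ?_
  filter_upwards [isOpen_Ioo.mem_nhds hy] with s hs
  exact arc_eq_modelArc ha hlN hk (Ioo_subset_Ico_self hs) x

theorem abs_len_mul_deriv_arc_sub_le (ha : 0 < a) (hN : 1 < N) (hlN : l = 1 / N) (hlh : l < h)
    (hφ : Differentiable ℝ φ) (hφ01 : ∀ t, φ t ∈ Icc 0 1) (hφ' : ∀ t, |deriv φ t| ≤ 2)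
    (hk : k ≠ 0) (hy : y ∈ Ioo (ySeq a k) (ySeq a (k + 1))) {x : ℝ} (hx : x ∈ Icc 0 π) :
    |len a h l φ y * deriv (fun s => arc a h l φ x s) y
        - arc a h l φ x y * deriv (len a h l φ) y|
      ≤ 2048 * (h / l) ^ 2 / a * (l / a) ^ k * len a h l φ y ^ 2 := by
  have hN0 : (0 : ℝ) < N := by positivity
  have hρ : 1 ≤ h * N := by
    rw [hlN, div_lt_iff₀ hN0] at hlh; exact hlh.le
  have hα : 1 ≤ (h * N) ^ k := one_le_pow₀ hρ
  have hαβ : (h * N) ^ k ≤ (h * N) ^ (k + 1) := pow_le_pow_right₀ hρ k.le_succ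
  have hl : 0 < l := by rw [hlN]; positivity
  have hy' := Ioo_subset_Ico_self hy
  rw [(hasDerivAt_arc ha hlN hk hφ hy x).deriv,
    show deriv (len a h l φ) y = _ from (hasDerivAt_arc ha hlN hk hφ hy π).deriv,
    show len a h l φ y = _ from arc_eq_modelArc ha hlN hk hy' π, arc_eq_modelArc ha hlN hk hy' x]
  set c := phiSeq a φ k y
  have hc : c ∈ Icc 0 1 := hφ01 _
  have hdet := abs_modelArc_mul_modelArcDeriv_sub_le hc (by positivity) hαβ
    (hα.trans hαβ) (pow_pos (by omega) k) (pow_dvd_pow N k.le_succ) hx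
  have hlow := pi_mul_div_four_le_modelArc hc hαβ (pow_pos (by omega) k)
    (pow_pos (by omega) (k + 1)) (Nat.pow_lt_pow_right hN k.lt_succ_self).ne
  have hc' := abs_deriv_phiSeq_le ha hφ hφ' k y
  push_cast at hdet
  set M := modelArc ((h * N) ^ k) ((h * N) ^ (k + 1)) (N ^ k) (N ^ (k + 1)) c
  set D := modelArcDeriv ((h * N) ^ k) ((h * N) ^ (k + 1)) (N ^ k) (N ^ (k + 1)) c
  calc |M π * (D x * deriv (phiSeq a φ k) y) - M x * (D π * deriv (phiSeq a φ k) y)|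
        = |M π * D x - M x * D π| * |deriv (phiSeq a φ k) y| := by
        rw [← abs_mul]; ring_nf
    _ ≤ 64 * π ^ 2 * ((h * N) ^ (k + 1)) ^ 2 / N ^ k * (2 / a ^ (k + 1)) :=
        mul_le_mul hdet hc' (abs_nonneg _) (by positivity)
    _ = 2048 * (h / l) ^ 2 / a * (l / a) ^ k * (π * (h * N) ^ k / 4) ^ 2 := by
        rw [hlN, div_pow (1 / (N : ℝ)), one_div, inv_pow]; field_simp; ring
    _ ≤ 2048 * (h / l) ^ 2 / a * (l / a) ^ k * M π ^ 2 := by gcongr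

end Strip

theorem len_cancellation_estimate_general (a h l : ℝ) (ha0 : 0 < a) (ha1 : a < 1)
    (hl1 : l < 1) (hlN : ∃ N : ℕ, 0 < N ∧ l = 1 / N)
    (φ : ℝ → ℝ) (hφsmooth : ContDiff ℝ (⊤ : ℕ∞) φ)
    (hφ01 : ∀ t, φ t ∈ Set.Icc (0:ℝ) 1)
    (hφd0 : ∀ t, 0 ≤ deriv φ t) (hφd2 : ∀ t, deriv φ t ≤ 2)
    (hla : l < a) (hlh : l < h) :
    (∀ k : ℕ, 1 ≤ k → ∀ x ∈ Icc (0:ℝ) π, ∀ y ∈ Ioo (ySeq a k) (ySeq a (k + 1)),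
      DifferentiableAt ℝ (fun s => arc a h l φ x s) y ∧
      DifferentiableAt ℝ (len a h l φ) y) ∧
    (∃ C : ℝ, 0 < C ∧ ∀ k : ℕ, 1 ≤ k → ∀ x ∈ Icc (0:ℝ) π,
      ∀ y ∈ Ioo (ySeq a k) (ySeq a (k + 1)),
      |len a h l φ y * deriv (fun s => arc a h l φ x s) y
          - arc a h l φ x y * deriv (len a h l φ) y|
        ≤ C * (l / a) ^ k * len a h l φ y ^ 2) ∧
    (∀ ε : ℝ, 0 < ε → ∃ y' : ℝ, y' < yInf a ∧ ∀ k : ℕ, 1 ≤ k →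
      ∀ y ∈ Ioo (ySeq a k) (ySeq a (k + 1)), y' < y → ∀ x ∈ Icc (0:ℝ) π,
      |len a h l φ y * deriv (fun s => arc a h l φ x s) y
          - arc a h l φ x y * deriv (len a h l φ) y| / len a h l φ y ^ 2 < ε) := by
  obtain ⟨N, hN0, hlN⟩ := hlN
  have hl0 : 0 < l := by rw [hlN]; positivity
  have hh0 : 0 < h := hl0.trans hlh
  have hN : 1 < N := by
    rw [hlN, div_lt_one (by positivity)] at hl1; exact_mod_cast hl1
  have hφ : Differentiable ℝ φ := hφsmooth.differentiable (by simp)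
  have hφ' : ∀ t, |deriv φ t| ≤ 2 := fun t => abs_le.mpr ⟨by linarith [hφd0 t], hφd2 t⟩
  have hr : 0 ≤ l / a ∧ l / a < 1 := ⟨by positivity, (div_lt_one ha0).mpr hla⟩
  set C := 2048 * (h / l) ^ 2 / a
  have hestimate {k : ℕ} (hk : 1 ≤ k) {x y : ℝ} (hx : x ∈ Icc 0 π) (hy) :=
    abs_len_mul_deriv_arc_sub_le ha0 hN hlN hlh hφ hφ01 hφ' (k := k) (y := y) (by omega) hy hx
  refine ⟨fun k hk x _ y hy => ⟨(hasDerivAt_arc ha0 hlN (by omega) hφ hy x).differentiableAt,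
      (hasDerivAt_arc ha0 hlN (by omega) hφ hy π).differentiableAt⟩,
    ⟨C, by positivity, fun k hk x hx y hy => hestimate hk hx hy⟩, fun ε hε => ?_⟩
  obtain ⟨K, hK⟩ : ∃ K : ℕ, C * (l / a) ^ K < ε :=
    (((tendsto_pow_atTop_nhds_zero_of_lt_one hr.1 hr.2).const_mul C).eventually
      (gt_mem_nhds (by simpa using hε))).exists
  refine ⟨ySeq a K, ySeq_lt_yInf ha0 ha1 K, fun k hk y hy hKy x hx => ?_⟩
  have hL : 0 < len a h l φ y ^ 2 :=
    pow_pos (pi_pos.trans_le (pi_le_len ha0 hlN (by omega) (Ioo_subset_Ico_self hy))) 2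
  rw [div_lt_iff₀ hL]
  calc _ ≤ C * (l / a) ^ k * len a h l φ y ^ 2 := hestimate hk hx hy
    _ ≤ C * (l / a) ^ K * len a h l φ y ^ 2 := by
        gcongr C * ?_ * _
        exact pow_le_pow_of_le_one hr.1 hr.2.le (le_of_ySeq_lt ha0 hKy hy.2)
    _ < ε * len a h l φ y ^ 2 := by gcongr

/-- Assume `λ < a` and `λ < h`. On each open strip `(y_k, y_{k+1})` the functions
`y ↦ L(x,y)` and `y ↦ L(y)` are differentiable, the cancellation estimate
`|L(y) ∂_y L(x,y) - L(x,y) ∂_y L(y)| ≤ C (λ/a)^k L(y)²` holds with a constant `C`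
independent of `k`, `x`, `y`, and consequently
`sup_x |L(y) ∂_y L(x,y) - L(x,y) ∂_y L(y)|/L(y)² → 0` as `y → y_∞`. -/
theorem len_cancellation_estimate (a h l : ℝ) (ha0 : 0 < a) (ha1 : a < 1) (hh0 : 0 < h) (hh1 : h < 1)
    (hl0 : 0 < l) (hl1 : l < 1) (hlN : ∃ N : ℕ, 0 < N ∧ l = 1 / N)
    (φ : ℝ → ℝ) (hφsmooth : ContDiff ℝ (⊤ : ℕ∞) φ) (hφmono : Monotone φ)
    (hφ01 : ∀ t, φ t ∈ Set.Icc (0:ℝ) 1)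
    (hφd0 : ∀ t, 0 ≤ deriv φ t) (hφd2 : ∀ t, deriv φ t ≤ 2)
    (hφ0 : ∃ ε > 0, ∀ t < ε, φ t = 0) (hφ1 : ∃ ε > 0, ∀ t > 1 - ε, φ t = 1)
    (hla : l < a) (hlh : l < h) :
    (∀ k : ℕ, 1 ≤ k → ∀ x ∈ Icc (0:ℝ) π, ∀ y ∈ Ioo (ySeq a k) (ySeq a (k + 1)),
      DifferentiableAt ℝ (fun s => arc a h l φ x s) y ∧
      DifferentiableAt ℝ (len a h l φ) y) ∧
    (∃ C : ℝ, 0 < C ∧ ∀ k : ℕ, 1 ≤ k → ∀ x ∈ Icc (0:ℝ) π,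
      ∀ y ∈ Ioo (ySeq a k) (ySeq a (k + 1)),
      |len a h l φ y * deriv (fun s => arc a h l φ x s) y
          - arc a h l φ x y * deriv (len a h l φ) y|
        ≤ C * (l / a) ^ k * len a h l φ y ^ 2) ∧
    (∀ ε : ℝ, 0 < ε → ∃ y' : ℝ, y' < yInf a ∧ ∀ k : ℕ, 1 ≤ k →
      ∀ y ∈ Ioo (ySeq a k) (ySeq a (k + 1)), y' < y → ∀ x ∈ Icc (0:ℝ) π,
      |len a h l φ y * deriv (fun s => arc a h l φ x s) y
          - arc a h l φ x y * deriv (len a h l φ) y| / len a h l φ y ^ 2 < ε) :=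
  len_cancellation_estimate_general a h l ha0 ha1 hl1 hlN φ hφsmooth hφ01 hφd0 hφd2 hla hlh

end StokesCounterexample
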